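/- Suppose C has unique decomposition, f_C(α) > 1, and t is chosen so that η := Σ_{j=1}^t |C_j| e^{-jα} > 1. Then for every k there exists N with k ≤ N ≤ tk such that the number of distinct words of length N obtained as concatenations w_1⋯w_k with each w_i ∈ C of length ≤ t satisfies |L_N(X_C)| ≥ e^{Nα} η^k / (tk). -/

import Mathlib

open Filter Topology MeasureTheory

variable {A : Type*}

/-- The left shift on bi-infinite sequences. -/
def shift (x : ℤ → A) : ℤ → A := fun n => x (n + 1)

/-- The word `x([i, i+n))` read off from a point `x`. -/
def wordAt (x : ℤ → A) (i : ℤ) (n : ℕ) : List A :=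
  (List.range n).map fun j => x (i + j)

/-- A subshift: a closed, shift-invariant subset of the full shift. -/
def IsSubshift [TopologicalSpace A] (X : Set (ℤ → A)) : Prop :=
  IsClosed X ∧ ∀ x ∈ X, shift x ∈ X

/-- The set of words of length `n` appearing in points of `X`. -/
def language (X : Set (ℤ → A)) (n : ℕ) : Set (List A) :=
  {w | ∃ x ∈ X, ∃ i : ℤ, wordAt x i n = w}

/-- Topological entropy of a subshift, as a limsup. -/
noncomputable def entropy (X : Set (ℤ → A)) : ℝ :=
  Filter.limsup (fun n : ℕ => Real.log ((language X n).ncard) / n) Filter.atTop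

/-- The set `C_n` of code words of length `n`. -/
def Cwords (C : Set (List A)) (n : ℕ) : Set (List A) := {w ∈ C | w.length = n}

/-- The generating function `f_C(α) = ∑_{j ≥ 1} |C_j| e^{-jα}`, valued in `[0, ∞]`. -/
noncomputable def fC (C : Set (List A)) (α : ℝ) : ENNReal :=
  ∑' n : ℕ, ((Cwords C (n + 1)).ncard : ENNReal) *
    ENNReal.ofReal (Real.exp (-((n : ℝ) + 1) * α))

/-- The set `B_C` of bi-infinite concatenations of code words. -/
def Bset (C : Set (List A)) : Set (ℤ → A) :=
  {x | ∃ s : ℤ → ℤ, StrictMono s ∧ Tendsto s atTop atTop ∧ Tendsto s atBot atBot ∧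
    ∀ k : ℤ, wordAt x (s k) (s (k + 1) - s k).toNat ∈ C}

/-- The set `L_C` of limits of single code words. -/
def Lset (C : Set (List A)) : Set (ℤ → A) :=
  {x | ∀ k : ℕ, ∃ w ∈ C, wordAt x (-(k : ℤ)) (2 * k + 1) <:+: w}

/-- The coded subshift `X_C`, the closure of `B_C`. -/
def Xset [TopologicalSpace A] (C : Set (List A)) : Set (ℤ → A) := closure (Bset C)

/-- `C` has unique decomposition: no finite word is a concatenation of `C`-words
in two different ways. -/
def UniqueDecomposition (C : Set (List A)) : Prop :=
  ∀ l l' : List (List A), (∀ w ∈ l, w ∈ C) → (∀ w ∈ l', w ∈ C) →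
    l.flatten = l'.flatten → l = l'

/-- `n`-letter prefixes of words in `C`. -/
def Pn (C : Set (List A)) (n : ℕ) : Set (List A) :=
  {w | w.length = n ∧ ∃ v ∈ C, w <+: v}

/-- `n`-letter suffixes of words in `C`. -/
def Sn (C : Set (List A)) (n : ℕ) : Set (List A) :=
  {w | w.length = n ∧ ∃ v ∈ C, w <:+ v}

/-- `n`-letter subwords of words in `C`. -/
def Wn (C : Set (List A)) (n : ℕ) : Set (List A) :=
  {w | w.length = n ∧ ∃ v ∈ C, w <:+: v}

/-- The measure of the cylinder set of a word. -/
noncomputable def cylMeasure [MeasurableSpace A] (μ : Measure (ℤ → A)) (w : List A) : ℝ :=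
  (μ {x : ℤ → A | wordAt x 0 w.length = w}).toReal

/-- Measure-theoretic (Kolmogorov–Sinai) entropy of a shift-invariant measure. -/
noncomputable def measEntropy [MeasurableSpace A] [Fintype A] [DecidableEq A]
    (μ : Measure (ℤ → A)) : ℝ :=
  Filter.limsup (fun n : ℕ =>
    (-1 / (n : ℝ)) * ∑ w : Fin n → A,
      cylMeasure μ (List.ofFn w) * Real.log (cylMeasure μ (List.ofFn w))) Filter.atTop

/-!
Expanding `η ^ k` and grouping the `k`-tuples of code words of lengths `≤ t` by their total
length `N ∈ [k, tk]` gives `η ^ k = ∑_N e^{-Nα} c_N`, where `c_N` counts the tuples whose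
concatenation has length `N`. Every finite concatenation of code words occurs in a periodic point
of `B_C`, and unique decomposition makes concatenation injective, so `c_N ≤ |L_N(X_C)|`. Since
there are at most `tk` values of `N`, one of the terms is at least `η ^ k / (tk)`.
-/

lemma wordAt_length (x : ℤ → A) (i : ℤ) (n : ℕ) : (wordAt x i n).length = n := by
  simp [wordAt]

lemma getElem_wordAt (x : ℤ → A) (i : ℤ) (n j : ℕ) (h : j < (wordAt x i n).length) :
    (wordAt x i n)[j] = x (i + j) := by
  simp [wordAt, ← List.map_eq_flatMap]

lemma Int.add_sub_le_of_strictMono {f : ℤ → ℤ} (hf : StrictMono f) {m n : ℤ} (h : m ≤ n) :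
    f m + (n - m) ≤ f n := by
  induction n, h using Int.leInduction with
  | base => simp
  | succ n _ ih => have := hf (lt_add_one n); omega

lemma StrictMono.tendsto_atTop_of_int {f : ℤ → ℤ} (hf : StrictMono f) :
    Tendsto f atTop atTop := by
  refine tendsto_atTop_atTop.2 fun b => ⟨max 0 (b - f 0), fun a ha => ?_⟩
  have := Int.add_sub_le_of_strictMono hf (le_of_max_le_left ha)
  omega

lemma StrictMono.tendsto_atBot_of_int {f : ℤ → ℤ} (hf : StrictMono f) :
    Tendsto f atBot atBot := by
  refine tendsto_atBot_atBot.2 fun b => ⟨min 0 (b - f 0), fun a ha => ?_⟩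
  have := Int.add_sub_le_of_strictMono hf (le_min_iff.1 ha).1
  omega

/-- `⋯ F F F ⋯`, with a copy of `F` starting at `0`; the dummy letter `a` is read only when
`F = []`. -/
def periodicPoint (F : List A) (a : A) : ℤ → A :=
  fun m => F.getD (m % F.length).toNat a

lemma wordAt_periodicPoint (F : List A) (a : A) (q : ℤ) {i j : ℕ} (hij : i ≤ j)
    (hj : j ≤ F.length) :
    wordAt (periodicPoint F a) (q * F.length + i) (j - i) = (F.take j).drop i := by
  apply List.ext_getElem
  · simp only [wordAt_length, List.length_drop, List.length_take]; omega
  · intro n h _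
    have hn : n < j - i := by rwa [wordAt_length] at h
    have hmod : (q * F.length + i + n : ℤ) % F.length = ((i + n : ℕ) : ℤ) := by
      rw [add_assoc, add_comm, Int.add_mul_emod_self_right, Int.emod_eq_of_lt] <;> omega
    simp only [getElem_wordAt, periodicPoint, hmod, Int.toNat_natCast, List.getElem_drop,
      List.getElem_take]
    exact List.getD_eq_getElem _ _ (by omega)

/-- The position in `periodicPoint L.flatten a` at which the `m`-th code word begins, where
`m = q * L.length + r` refers to `L[r]` in the `q`-th period. -/
def cutPoint (L : List (List A)) (m : ℤ) : ℤ :=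
  m / L.length * L.flatten.length + ((L.map List.length).take (m % L.length).toNat).sum

lemma cutPoint_mul_add_of_lt (L : List (List A)) (q : ℤ) {r : ℕ} (hr : r < L.length) :
    cutPoint L (q * L.length + r) = q * L.flatten.length + ((L.map List.length).take r).sum := by
  have hdiv : (q * L.length + r) / L.length = q := by
    rw [add_comm, Int.add_mul_ediv_right _ _ (by omega), Int.ediv_eq_zero_of_lt (by omega)
      (by omega), zero_add]
  have hmod : (q * L.length + r : ℤ) % L.length = r := by
    rw [add_comm, Int.add_mul_emod_self_right, Int.emod_eq_of_lt (by omega) (by omega)]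
  simp [cutPoint, hdiv, hmod]

lemma cutPoint_mul_add (L : List (List A)) (q : ℤ) {r : ℕ} (hr : r ≤ L.length) :
    cutPoint L (q * L.length + r) = q * L.flatten.length + ((L.map List.length).take r).sum := by
  rcases hr.lt_or_eq with hr | rfl
  · exact cutPoint_mul_add_of_lt L q hr
  rcases eq_or_ne L [] with rfl | hL
  · simp [cutPoint]
  have h := cutPoint_mul_add_of_lt L (q + 1) (List.length_pos_iff.2 hL)
  simp only [CharP.cast_eq_zero, add_zero, List.take_zero, List.sum_nil] at h
  rw [← add_one_mul, h, List.take_of_length_le (by simp), ← List.length_flatten]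
  ring

lemma sum_take_map_length_le (L : List (List A)) (r : ℕ) :
    ((L.map List.length).take r).sum ≤ L.flatten.length := by
  rw [List.length_flatten]
  exact (List.take_sublist _ _).sum_le_sum fun _ _ => Nat.zero_le _

lemma exists_eq_mul_add_of_pos (m : ℤ) {k : ℕ} (hk : 0 < k) :
    ∃ q : ℤ, ∃ r < k, m = q * k + r := by
  have h0 := Int.emod_nonneg m (by omega : (k : ℤ) ≠ 0)
  have hlt := Int.emod_lt_of_pos m (by omega : (0 : ℤ) < k)
  exact ⟨m / k, (m % k).toNat, by omega, by
    rw [Int.toNat_of_nonneg h0, mul_comm, Int.mul_ediv_add_emod]⟩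

lemma flatten_mem_language [TopologicalSpace A] {C : Set (List A)} {L : List (List A)}
    (hC : ∀ w ∈ L, w ∈ C) (hne : ∀ w ∈ L, w ≠ []) (hL : L ≠ []) :
    L.flatten ∈ language (Xset C) L.flatten.length := by
  have hF : L.flatten ≠ [] := by
    simpa [List.flatten_eq_nil_iff] using ⟨L.head hL, L.head_mem hL, hne _ (L.head_mem hL)⟩
  set x := periodicPoint L.flatten (L.flatten.head hF)
  have hblock : ∀ (q : ℤ) (r : ℕ) (hr : r < L.length),
      cutPoint L (q * L.length + r + 1) - cutPoint L (q * L.length + r) = L[r].length ∧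
      wordAt x (cutPoint L (q * L.length + r)) L[r].length = L[r] := by
    intro q r hr
    have hsucc : ((L.map List.length).take (r + 1)).sum
        = ((L.map List.length).take r).sum + L[r].length := by
      rw [List.sum_take_succ _ _ (by simpa using hr), List.getElem_map]
    have hwin := wordAt_periodicPoint L.flatten (L.flatten.head hF) q (Nat.le_add_right _ _)
      (hsucc ▸ sum_take_map_length_le L (r + 1))
    rw [Nat.add_sub_cancel_left, ← hsucc, List.drop_take_succ_flatten_eq_getElem L r hr] at hwin
    have hcast : (q * L.length + r + 1 : ℤ) = q * L.length + ((r + 1 : ℕ) : ℤ) := by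
      push_cast; ring
    rw [hcast, cutPoint_mul_add L q hr, cutPoint_mul_add L q hr.le, hsucc]
    exact ⟨by push_cast; ring, hwin⟩
  have hmono : StrictMono (cutPoint L) := by
    refine strictMono_int_of_lt_succ fun m => ?_
    obtain ⟨q, r, hr, rfl⟩ := exists_eq_mul_add_of_pos m (List.length_pos_iff.2 hL)
    have := List.length_pos_iff.2 (hne _ (L.getElem_mem hr))
    have := (hblock q r hr).1
    omega
  refine ⟨x, subset_closure ⟨cutPoint L, hmono, hmono.tendsto_atTop_of_int,
    hmono.tendsto_atBot_of_int, fun m => ?_⟩, 0, ?_⟩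
  · obtain ⟨q, r, hr, rfl⟩ := exists_eq_mul_add_of_pos m (List.length_pos_iff.2 hL)
    obtain ⟨hdiff, hword⟩ := hblock q r hr
    rw [hdiff, Int.toNat_natCast, hword]
    exact hC _ (L.getElem_mem hr)
  · have := wordAt_periodicPoint L.flatten (L.flatten.head hF) 0 (Nat.zero_le _) le_rfl
    rwa [List.take_length, List.drop_zero, Nat.sub_zero, zero_mul, Nat.cast_zero, zero_add]
      at this

lemma Cwords_finite [Finite A] (C : Set (List A)) (n : ℕ) : (Cwords C n).Finite :=
  (List.finite_length_eq A n).subset fun _ hw => hw.2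

lemma language_finite [Finite A] (X : Set (ℤ → A)) (n : ℕ) : (language X n).Finite :=
  (List.finite_length_eq A n).subset fun _ ⟨x, _, i, hw⟩ => hw ▸ wordAt_length x i n

/-- Unique decomposition makes concatenation injective on `k`-tuples of code words, so tuples
with different length profiles in `S` give distinct words of `L_N(X_C)`. -/
lemma sum_prod_ncard_Cwords_le_ncard_language [Finite A] [TopologicalSpace A]
    {C : Set (List A)} (hUD : UniqueDecomposition C) {k N : ℕ} (hk : 0 < k)
    (S : Finset (Fin k → ℕ)) (hpos : ∀ g ∈ S, ∀ i, 0 < g i) (hsum : ∀ g ∈ S, ∑ i, g i = N) :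
    ∑ g ∈ S, ∏ i, (Cwords C (g i)).ncard ≤ (language (Xset C) N).ncard := by
  classical
  set W := fun j => (Cwords_finite C j).toFinset
  set B := S.biUnion fun g => Fintype.piFinset fun i => W (g i)
  have hmemB : ∀ q ∈ B, ∃ g ∈ S, ∀ i, q i ∈ C ∧ (q i).length = g i := by
    intro q hq
    obtain ⟨g, hg, hq⟩ := Finset.mem_biUnion.1 hq
    exact ⟨g, hg, fun i => by simpa [W, Cwords] using Fintype.mem_piFinset.1 hq i⟩
  have hcard : B.card = ∑ g ∈ S, ∏ i, (Cwords C (g i)).ncard := by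
    rw [Finset.card_biUnion]
    · simp only [Fintype.card_piFinset, W, Set.ncard_eq_toFinset_card _ (Cwords_finite C _)]
    · intro g _ g' _ hne
      refine Finset.disjoint_left.2 fun q hq hq' => hne (funext fun i => ?_)
      have h := (Set.Finite.mem_toFinset _).1 (Fintype.mem_piFinset.1 hq i)
      have h' := (Set.Finite.mem_toFinset _).1 (Fintype.mem_piFinset.1 hq' i)
      exact h.2.symm.trans h'.2
  rw [← hcard, ← Set.ncard_coe_finset]
  refine Set.ncard_le_ncard_of_injOn (fun q => (List.ofFn q).flatten) (fun q hq => ?_)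
    (fun q hq q' hq' he => ?_) (language_finite _ N)
  · obtain ⟨g, hg, hq⟩ := hmemB q hq
    have hlen : (List.ofFn q).flatten.length = N := by
      simp [List.length_flatten, List.sum_ofFn, (hq _).2, ← hsum g hg]
    rw [← hlen]
    refine flatten_mem_language (by simpa [List.mem_ofFn] using fun i => (hq i).1) ?_
      (by simpa using hk.ne')
    simp only [List.mem_ofFn, forall_exists_index, forall_apply_eq_imp_iff]
    exact fun i h => (hpos g hg i).ne' (by rw [← (hq i).2, h, List.length_nil])
  · obtain ⟨_, _, hq⟩ := hmemB q hq
    obtain ⟨_, _, hq'⟩ := hmemB q' hq'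
    exact List.ofFn_injective (hUD _ _ (by simpa [List.mem_ofFn] using fun i => (hq i).1)
      (by simpa [List.mem_ofFn] using fun i => (hq' i).1) he)

open Finset in
lemma pow_sum_mul_exp_eq_sum_Icc (a : ℕ → ℝ) (α : ℝ) (t k : ℕ) :
    (∑ j ∈ Icc 1 t, a j * Real.exp (-(j : ℝ) * α)) ^ k =
      ∑ N ∈ Icc k (t * k), Real.exp (-(N : ℝ) * α) *
        ∑ g ∈ Fintype.piFinset (fun _ : Fin k => Icc 1 t) with ∑ i, g i = N, ∏ i, a (g i) := by
  have hmaps : ∀ g ∈ Fintype.piFinset (fun _ : Fin k => Icc 1 t), ∑ i, g i ∈ Icc k (t * k) := by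
    intro g hg
    have hg := fun i => mem_Icc.1 (Fintype.mem_piFinset.1 hg i)
    have hlo := sum_le_sum fun i (_ : i ∈ univ) => (hg i).1
    have hhi := sum_le_sum fun i (_ : i ∈ univ) => (hg i).2
    simp only [sum_const, card_univ, Fintype.card_fin, smul_eq_mul, mul_one] at hlo hhi
    exact mem_Icc.2 ⟨hlo, by linarith⟩
  rw [← Fin.prod_const, prod_univ_sum, ← sum_fiberwise_of_maps_to hmaps]
  refine sum_congr rfl fun N _ => ?_
  rw [mul_sum]
  refine sum_congr rfl fun g hg => ?_
  rw [prod_mul_distrib, ← Real.exp_sum, ← (mem_filter.1 hg).2, mul_comm]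
  push_cast
  rw [neg_mul, sum_mul, ← sum_neg_distrib]
  simp only [neg_mul]

open Finset in
lemma exists_mem_Icc_div_le_of_le_sum {f : ℕ → ℝ} {x : ℝ} (hx : 0 ≤ x) {t k : ℕ} (ht : 1 ≤ t)
    (hk : 1 ≤ k) (h : x ≤ ∑ N ∈ Icc k (t * k), f N) :
    ∃ N ∈ Icc k (t * k), x / (t * k) ≤ f N := by
  have hcard : (#(Icc k (t * k)) : ℝ) ≤ t * k := by
    rw [Nat.card_Icc]
    exact_mod_cast (by omega : t * k + 1 - k ≤ t * k)
  refine exists_le_of_sum_le (nonempty_Icc.2 (by nlinarith)) (le_trans ?_ h)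
  rw [sum_const, nsmul_eq_mul]
  calc (#(Icc k (t * k)) : ℝ) * (x / (t * k)) ≤ t * k * (x / (t * k)) := by gcongr
    _ = x := mul_div_cancel₀ _ (by positivity)

theorem stmt13_general [Fintype A] [TopologicalSpace A]
    (C : Set (List A)) (α : ℝ) (t : ℕ) (η : ℝ)
    (hUD : UniqueDecomposition C)
    (hη : η = ∑ j ∈ Finset.Icc 1 t, ((Cwords C j).ncard : ℝ) * Real.exp (-(j : ℝ) * α))
    (h1 : 1 < η) :
    ∀ k : ℕ, 1 ≤ k → ∃ N : ℕ, k ≤ N ∧ N ≤ t * k ∧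
      Real.exp ((N : ℝ) * α) * η ^ k / (t * k) ≤ ((language (Xset C) N).ncard : ℝ) := by
  intro k hk
  have ht : 1 ≤ t := Nat.one_le_iff_ne_zero.2 fun ht => by simp [ht] at hη; linarith
  have hcount : η ^ k ≤ ∑ N ∈ Finset.Icc k (t * k),
      Real.exp (-(N : ℝ) * α) * (language (Xset C) N).ncard := by
    rw [hη, pow_sum_mul_exp_eq_sum_Icc]
    gcongr with N
    exact_mod_cast sum_prod_ncard_Cwords_le_ncard_language hUD hk _
      (fun g hg i => (Finset.mem_Icc.1 (Fintype.mem_piFinset.1 (Finset.mem_filter.1 hg).1 i)).1)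
      (fun g hg => (Finset.mem_filter.1 hg).2)
  obtain ⟨N, hN, hle⟩ :=
    exists_mem_Icc_div_le_of_le_sum (by positivity) ht hk hcount
  refine ⟨N, (Finset.mem_Icc.1 hN).1, (Finset.mem_Icc.1 hN).2, ?_⟩
  calc Real.exp (N * α) * η ^ k / (t * k) = Real.exp (N * α) * (η ^ k / (t * k)) := by ring
    _ ≤ Real.exp (N * α) * (Real.exp (-N * α) * (language (Xset C) N).ncard) := by gcongr
    _ = (language (Xset C) N).ncard := by rw [← mul_assoc, ← Real.exp_add]; simp

/-- under unique decomposition, `f_C(α) > 1` and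
`η = ∑_{j=1}^t |C_j| e^{-jα} > 1`, for every `k ≥ 1` there is `N` with
`k ≤ N ≤ tk` and `|L_N(X_C)| ≥ e^{Nα} η^k / (tk)`. -/
theorem stmt13 [Fintype A] [TopologicalSpace A] [DiscreteTopology A]
    (C : Set (List A)) (α : ℝ) (t : ℕ) (η : ℝ)
    (hUD : UniqueDecomposition C) (hf : 1 < fC C α)
    (hη : η = ∑ j ∈ Finset.Icc 1 t, ((Cwords C j).ncard : ℝ) * Real.exp (-(j : ℝ) * α))
    (h1 : 1 < η) :
    ∀ k : ℕ, 1 ≤ k → ∃ N : ℕ, k ≤ N ∧ N ≤ t * k ∧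
      Real.exp ((N : ℝ) * α) * η ^ k / (t * k) ≤ ((language (Xset C) N).ncard : ℝ) :=
  stmt13_general C α t η hUD hη h1
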